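/- Under the stated setup, suppose in addition that φ satisfies the multitime Hamiltonian (Euler–Lagrange) equations Υ_k^n(t) = 0 for all k ∈ {1,…,K}, n ∈ {1,…,2p} and t ∈ ℝᴷ. Then ∂_{t^ℓ}L_k(t) − ∂_{t^k}L_ℓ(t) = {H_k, H_ℓ}(ξ(φ(t))) for all k, ℓ and t; in particular, the closure relation ∂_{t^ℓ}L_k = ∂_{t^k}L_ℓ holds identically along φ if and only if the Hamiltonians are in involution along the solution, i.e. {H_k, H_ℓ}(ξ(φ(t))) = 0 for all k, ℓ and t. -/

import Mathlib

open Matrix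

/-!
Write `a_k = ∂_k(ξ ∘ φ)`. In `∂_ℓ L_k − ∂_k L_ℓ` the terms with second derivatives of `φ` cancel
by symmetry of `D²φ`, and what remains of the first part of `L_k` is the curl of `π`, which by the
pullback relation is `ω(a_k, a_ℓ)`; the Hamiltonian parts contribute `−dH_k(a_ℓ) + dH_ℓ(a_k)`.
The Euler–Lagrange equations say `∇H_k = a_k ω`, so these three terms add up to `ω(a_ℓ, a_k)`,
and since `ω P = 1` this equals `∇H_k · P ∇H_ℓ = {H_k, H_ℓ}`.
-/

section LinearAlgebra

variable {ι κ : Type*} [Fintype ι] [Fintype κ]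

theorem ContinuousLinearMap.apply_eq_dotProduct [DecidableEq ι] (f : (ι → ℝ) →L[ℝ] ℝ)
    (v : ι → ℝ) : f v = v ⬝ᵥ fun i => f (Pi.single i 1) := by
  conv_lhs => rw [← Finset.univ_sum_single v]
  simp only [map_sum, dotProduct]
  refine Finset.sum_congr rfl fun i _ => ?_
  rw [← smul_eq_mul, ← map_smul, ← Pi.single_smul', smul_eq_mul, mul_one]

theorem sum_sum_mul_mul_eq_dotProduct_mulVec (a b : ι → ℝ) (W : Matrix ι ι ℝ) :
    ∑ m, ∑ n, a m * W m n * b n = a ⬝ᵥ W *ᵥ b := by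
  simp [dotProduct, mulVec, Finset.mul_sum, mul_assoc]

theorem dotProduct_sub_dotProduct_eq_of_basis [DecidableEq ι] (A : (ι → ℝ) →L[ℝ] (ι → ℝ))
    (B : (ι → ℝ) →L[ℝ] (κ → ℝ)) (W : Matrix κ κ ℝ)
    (h : ∀ α β, A (Pi.single β 1) α - A (Pi.single α 1) β
      = B (Pi.single α 1) ⬝ᵥ W *ᵥ B (Pi.single β 1)) (u w : ι → ℝ) :
    A w ⬝ᵥ u - A u ⬝ᵥ w = B u ⬝ᵥ W *ᵥ B w := by
  let D : (ι → ℝ) →ₗ[ℝ] (ι → ℝ) →ₗ[ℝ] ℝ := LinearMap.mk₂ ℝ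
    (fun u w => A w ⬝ᵥ u - A u ⬝ᵥ w - B u ⬝ᵥ W *ᵥ B w)
    (fun u u' w => by simp only [map_add, add_dotProduct, dotProduct_add]; ring)
    (fun c u w => by simp only [map_smul, smul_dotProduct, dotProduct_smul, smul_eq_mul]; ring)
    (fun u w w' => by simp only [map_add, add_dotProduct, dotProduct_add, mulVec_add]; ring)
    (fun c u w => by
      simp only [map_smul, smul_dotProduct, dotProduct_smul, mulVec_smul, smul_eq_mul]; ring)
  have hD : D = 0 := LinearMap.ext_basis (Pi.basisFun ℝ ι) (Pi.basisFun ℝ ι) fun α β => by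
    simp [D, dotProduct_single, ← h]
  exact sub_eq_zero.mp (LinearMap.congr_fun₂ hD u w)

theorem dotProduct_mulVec_sub_add_eq_of_mul_eq_one {R : Type*} [DecidableEq ι] [CommRing R]
    {W Q : Matrix ι ι R} (h : W * Q = 1) (a b : ι → R) :
    a ⬝ᵥ W *ᵥ b - b ⬝ᵥ (a ᵥ* W) + a ⬝ᵥ (b ᵥ* W) = (a ᵥ* W) ⬝ᵥ Q *ᵥ (b ᵥ* W) := by
  rw [dotProduct_mulVec (a ᵥ* W), vecMul_vecMul, h, vecMul_one, dotProduct_comm b,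
    dotProduct_mulVec]
  ring

end LinearAlgebra

section Calculus

variable {E ι κ : Type*} [NormedAddCommGroup E] [NormedSpace ℝ E] [Fintype ι] [Fintype κ]

theorem DifferentiableAt.dotProduct {f g : E → ι → ℝ} {x : E} (hf : DifferentiableAt ℝ f x)
    (hg : DifferentiableAt ℝ g x) : DifferentiableAt ℝ (fun s => f s ⬝ᵥ g s) x := by
  unfold _root_.dotProduct
  fun_prop

theorem fderiv_dotProduct_apply {f g : E → ι → ℝ} {x : E} (hf : DifferentiableAt ℝ f x)
    (hg : DifferentiableAt ℝ g x) (v : E) :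
    fderiv ℝ (fun s => f s ⬝ᵥ g s) x v = fderiv ℝ f x v ⬝ᵥ g x + f x ⬝ᵥ fderiv ℝ g x v := by
  have hcoord : ∀ {h : E → ι → ℝ}, DifferentiableAt ℝ h x → ∀ i,
      HasFDerivAt (fun s => h s i) ((ContinuousLinearMap.proj i).comp (fderiv ℝ h x)) x :=
    fun hh i => hasFDerivAt_pi'.mp hh.hasFDerivAt i
  have hsum := HasFDerivAt.fun_sum (u := Finset.univ) fun i _ =>
    (hcoord hf i).fun_mul (hcoord hg i)
  rw [show (fun s => f s ⬝ᵥ g s) = fun s => ∑ i, f s i * g s i from rfl, hsum.fderiv]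
  simp [dotProduct, Finset.sum_add_distrib, mul_comm, add_comm]

theorem ContDiffAt.differentiableAt_fderiv {F : Type*} [NormedAddCommGroup F]
    [NormedSpace ℝ F] {f : E → F} {x : E} (hf : ContDiffAt ℝ 2 f x) :
    DifferentiableAt ℝ (fderiv ℝ f) x :=
  (hf.fderiv_right (m := 1) (by norm_num)).differentiableAt (by norm_num)

variable {φ : E → ι → ℝ} {π : (ι → ℝ) → ι → ℝ} {ξ : (ι → ℝ) → κ → ℝ} {t : E}

theorem fderiv_dotProduct_fderiv_apply (hφ : ContDiffAt ℝ 2 φ t)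
    (hπ : DifferentiableAt ℝ π (φ t)) (u v : E) :
    fderiv ℝ (fun s => π (φ s) ⬝ᵥ fderiv ℝ φ s u) t v
      = fderiv ℝ π (φ t) (fderiv ℝ φ t v) ⬝ᵥ fderiv ℝ φ t u
        + π (φ t) ⬝ᵥ fderiv ℝ (fderiv ℝ φ) t v u := by
  have hφd : DifferentiableAt ℝ φ t := hφ.differentiableAt (by norm_num)
  have hφ'd : DifferentiableAt ℝ (fderiv ℝ φ) t := hφ.differentiableAt_fderiv
  rw [fderiv_dotProduct_apply (hπ.fun_comp' t hφd) (hφ'd.clm_apply (differentiableAt_const u)),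
    fderiv_fun_comp t hπ hφd, fderiv_clm_apply hφ'd (differentiableAt_const u)]
  simp

theorem fderiv_dotProduct_fderiv_antisymm [DecidableEq ι] {W : Matrix κ κ ℝ}
    (hφ : ContDiffAt ℝ 2 φ t) (hπ : DifferentiableAt ℝ π (φ t))
    (hξ : DifferentiableAt ℝ ξ (φ t))
    (hpull : ∀ α β, fderiv ℝ π (φ t) (Pi.single β 1) α - fderiv ℝ π (φ t) (Pi.single α 1) β
      = fderiv ℝ ξ (φ t) (Pi.single α 1) ⬝ᵥ W *ᵥ fderiv ℝ ξ (φ t) (Pi.single β 1))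
    (u w : E) :
    fderiv ℝ (fun s => π (φ s) ⬝ᵥ fderiv ℝ φ s u) t w
        - fderiv ℝ (fun s => π (φ s) ⬝ᵥ fderiv ℝ φ s w) t u
      = fderiv ℝ (fun s => ξ (φ s)) t u ⬝ᵥ W *ᵥ fderiv ℝ (fun s => ξ (φ s)) t w := by
  have hφd : DifferentiableAt ℝ φ t := hφ.differentiableAt (by norm_num)
  rw [fderiv_dotProduct_fderiv_apply hφ hπ, fderiv_dotProduct_fderiv_apply hφ hπ,
    (hφ.isSymmSndFDerivAt (by simp)).eq w u, fderiv_fun_comp t hξ hφd]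
  simpa using dotProduct_sub_dotProduct_eq_of_basis _ _ W hpull
    (fderiv ℝ φ t u) (fderiv ℝ φ t w)

theorem fderiv_lagrangian_apply [DecidableEq κ] {h : (κ → ℝ) → ℝ} (hφ : ContDiffAt ℝ 2 φ t)
    (hπ : DifferentiableAt ℝ π (φ t)) (hξ : DifferentiableAt ℝ ξ (φ t))
    (hh : DifferentiableAt ℝ h (ξ (φ t))) (u v : E) :
    fderiv ℝ (fun s => π (φ s) ⬝ᵥ fderiv ℝ φ s u - h (ξ (φ s))) t v
      = fderiv ℝ (fun s => π (φ s) ⬝ᵥ fderiv ℝ φ s u) t v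
        - fderiv ℝ (fun s => ξ (φ s)) t v ⬝ᵥ fun n => fderiv ℝ h (ξ (φ t)) (Pi.single n 1) := by
  have hφd : DifferentiableAt ℝ φ t := hφ.differentiableAt (by norm_num)
  have hξφ : DifferentiableAt ℝ (fun s => ξ (φ s)) t := hξ.fun_comp' t hφd
  have hform : DifferentiableAt ℝ (fun s => π (φ s) ⬝ᵥ fderiv ℝ φ s u) t :=
    (hπ.fun_comp' t hφd).dotProduct
      (hφ.differentiableAt_fderiv.clm_apply (differentiableAt_const u))
  rw [fderiv_fun_sub hform (hh.fun_comp' t hξφ), _root_.sub_apply, fderiv_fun_comp t hh hξφ,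
    ContinuousLinearMap.comp_apply, ContinuousLinearMap.apply_eq_dotProduct (fderiv ℝ h _)]

theorem fderiv_lagrangian_antisymm_of_euler_lagrange [DecidableEq ι] [DecidableEq κ]
    {W Q : Matrix κ κ ℝ} {hu hw : (κ → ℝ) → ℝ} (hφ : ContDiffAt ℝ 2 φ t)
    (hπ : DifferentiableAt ℝ π (φ t)) (hξ : DifferentiableAt ℝ ξ (φ t))
    (hhu : DifferentiableAt ℝ hu (ξ (φ t))) (hhw : DifferentiableAt ℝ hw (ξ (φ t)))
    (hWQ : W * Q = 1)
    (hpull : ∀ α β, fderiv ℝ π (φ t) (Pi.single β 1) α - fderiv ℝ π (φ t) (Pi.single α 1) β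
      = fderiv ℝ ξ (φ t) (Pi.single α 1) ⬝ᵥ W *ᵥ fderiv ℝ ξ (φ t) (Pi.single β 1))
    (u w : E)
    (hELu : (fun n => fderiv ℝ hu (ξ (φ t)) (Pi.single n 1))
      = fderiv ℝ (fun s => ξ (φ s)) t u ᵥ* W)
    (hELw : (fun n => fderiv ℝ hw (ξ (φ t)) (Pi.single n 1))
      = fderiv ℝ (fun s => ξ (φ s)) t w ᵥ* W) :
    fderiv ℝ (fun s => π (φ s) ⬝ᵥ fderiv ℝ φ s u - hu (ξ (φ s))) t w
        - fderiv ℝ (fun s => π (φ s) ⬝ᵥ fderiv ℝ φ s w - hw (ξ (φ s))) t u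
      = (fun n => fderiv ℝ hu (ξ (φ t)) (Pi.single n 1))
          ⬝ᵥ Q *ᵥ fun n => fderiv ℝ hw (ξ (φ t)) (Pi.single n 1) := by
  rw [fderiv_lagrangian_apply hφ hπ hξ hhu, fderiv_lagrangian_apply hφ hπ hξ hhw, hELu, hELw,
    ← dotProduct_mulVec_sub_add_eq_of_mul_eq_one hWQ,
    ← fderiv_dotProduct_fderiv_antisymm hφ hπ hξ hpull]
  ring

end Calculus

theorem statement8_general (K M p : ℕ)
    (φ : (Fin K → ℝ) → (Fin M → ℝ)) (hφ : ContDiff ℝ 2 φ)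
    (π : (Fin M → ℝ) → (Fin M → ℝ)) (hπ : ContDiff ℝ 1 π)
    (ξ : (Fin M → ℝ) → (Fin (2 * p) → ℝ)) (hξ : ContDiff ℝ 1 ξ)
    (H : Fin K → (Fin (2 * p) → ℝ) → ℝ) (hH : ∀ k, ContDiff ℝ 1 (H k))
    (ω P : (Fin (2 * p) → ℝ) → Matrix (Fin (2 * p)) (Fin (2 * p)) ℝ)
    (hPω : ∀ x, P x * ω x = 1)
    (hpull : ∀ (y : Fin M → ℝ) (α β : Fin M),
      fderiv ℝ π y (Pi.single β 1) α - fderiv ℝ π y (Pi.single α 1) β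
        = ∑ m, ∑ n, fderiv ℝ ξ y (Pi.single α 1) m * ω (ξ y) m n
            * fderiv ℝ ξ y (Pi.single β 1) n)
    (Lag : Fin K → (Fin K → ℝ) → ℝ)
    (hLag : ∀ k t, Lag k t
      = ∑ α, π (φ t) α * fderiv ℝ φ t (Pi.single k 1) α - H k (ξ (φ t)))
    (Υ : Fin K → Fin (2 * p) → (Fin K → ℝ) → ℝ)
    (hΥ : ∀ k n t, Υ k n t
      = ∑ m, ω (ξ (φ t)) m n * fderiv ℝ (fun s => ξ (φ s)) t (Pi.single k 1) m
        - fderiv ℝ (H k) (ξ (φ t)) (Pi.single n 1))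
    (hEL : ∀ k n t, Υ k n t = 0) :
    (∀ (k ℓ : Fin K) (t : Fin K → ℝ),
      fderiv ℝ (Lag k) t (Pi.single ℓ 1) - fderiv ℝ (Lag ℓ) t (Pi.single k 1)
        = ∑ m, ∑ n, P (ξ (φ t)) m n * fderiv ℝ (H k) (ξ (φ t)) (Pi.single m 1)
            * fderiv ℝ (H ℓ) (ξ (φ t)) (Pi.single n 1)) ∧
    ((∀ (k ℓ : Fin K) (t : Fin K → ℝ),
        fderiv ℝ (Lag k) t (Pi.single ℓ 1) = fderiv ℝ (Lag ℓ) t (Pi.single k 1)) ↔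
      (∀ (k ℓ : Fin K) (t : Fin K → ℝ),
        ∑ m, ∑ n, P (ξ (φ t)) m n * fderiv ℝ (H k) (ξ (φ t)) (Pi.single m 1)
            * fderiv ℝ (H ℓ) (ξ (φ t)) (Pi.single n 1) = 0)) := by
  have key : ∀ (k ℓ : Fin K) (t : Fin K → ℝ),
      fderiv ℝ (Lag k) t (Pi.single ℓ 1) - fderiv ℝ (Lag ℓ) t (Pi.single k 1)
        = ∑ m, ∑ n, P (ξ (φ t)) m n * fderiv ℝ (H k) (ξ (φ t)) (Pi.single m 1)
            * fderiv ℝ (H ℓ) (ξ (φ t)) (Pi.single n 1) := by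
    intro k ℓ t
    have hgrad : ∀ k, (fun n => fderiv ℝ (H k) (ξ (φ t)) (Pi.single n 1))
        = fderiv ℝ (fun s => ξ (φ s)) t (Pi.single k 1) ᵥ* ω (ξ (φ t)) := by
      intro k
      funext n
      rw [← sub_eq_zero.mp ((hΥ k n t).symm.trans (hEL k n t))]
      simp only [vecMul, dotProduct, mul_comm]
    have hpull_t : ∀ α β,
        fderiv ℝ π (φ t) (Pi.single β 1) α - fderiv ℝ π (φ t) (Pi.single α 1) β
          = fderiv ℝ ξ (φ t) (Pi.single α 1) ⬝ᵥ ω (ξ (φ t)) *ᵥ fderiv ℝ ξ (φ t) (Pi.single β 1) :=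
      fun α β => by rw [hpull, sum_sum_mul_mul_eq_dotProduct_mulVec]
    have hL : ∀ k, Lag k = fun s => π (φ s) ⬝ᵥ fderiv ℝ φ s (Pi.single k 1) - H k (ξ (φ s)) :=
      fun k => funext (hLag k)
    rw [hL, hL,
      fderiv_lagrangian_antisymm_of_euler_lagrange hφ.contDiffAt
        (hπ.differentiable one_ne_zero _) (hξ.differentiable one_ne_zero _)
        ((hH k).differentiable one_ne_zero _) ((hH ℓ).differentiable one_ne_zero _)
        (mul_eq_one_comm.mp (hPω _)) hpull_t _ _ (hgrad k) (hgrad ℓ),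
      ← sum_sum_mul_mul_eq_dotProduct_mulVec]
    simp only [mul_comm (P _ _ _)]
  refine ⟨key, forall₃_congr fun k ℓ t => ?_⟩
  rw [← sub_eq_zero, key]

/-- On solutions of the multitime Euler–Lagrange equations `Υ_k^n = 0`, one has
`∂_{t^ℓ}L_k − ∂_{t^k}L_ℓ = {H_k, H_ℓ}∘(ξ∘φ)`; in particular, the closure relation holds
identically along `φ` if and only if the Hamiltonians are in involution along the
solution. -/
theorem statement8 (K M p : ℕ) (hK : 1 ≤ K) (hM : 1 ≤ M) (hp : 1 ≤ p)
    (φ : (Fin K → ℝ) → (Fin M → ℝ)) (hφ : ContDiff ℝ 2 φ)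
    (π : (Fin M → ℝ) → (Fin M → ℝ)) (hπ : ContDiff ℝ 1 π)
    (ξ : (Fin M → ℝ) → (Fin (2 * p) → ℝ)) (hξ : ContDiff ℝ 1 ξ)
    (H : Fin K → (Fin (2 * p) → ℝ) → ℝ) (hH : ∀ k, ContDiff ℝ 1 (H k))
    (ω P : (Fin (2 * p) → ℝ) → Matrix (Fin (2 * p)) (Fin (2 * p)) ℝ)
    (hω : Continuous ω) (hP : Continuous P)
    (hanti : ∀ x, (ω x)ᵀ = -ω x)
    (hPω : ∀ x, P x * ω x = 1)
    (hpull : ∀ (y : Fin M → ℝ) (α β : Fin M),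
      fderiv ℝ π y (Pi.single β 1) α - fderiv ℝ π y (Pi.single α 1) β
        = ∑ m, ∑ n, fderiv ℝ ξ y (Pi.single α 1) m * ω (ξ y) m n
            * fderiv ℝ ξ y (Pi.single β 1) n)
    (Lag : Fin K → (Fin K → ℝ) → ℝ)
    (hLag : ∀ k t, Lag k t
      = ∑ α, π (φ t) α * fderiv ℝ φ t (Pi.single k 1) α - H k (ξ (φ t)))
    (Υ : Fin K → Fin (2 * p) → (Fin K → ℝ) → ℝ)
    (hΥ : ∀ k n t, Υ k n t
      = ∑ m, ω (ξ (φ t)) m n * fderiv ℝ (fun s => ξ (φ s)) t (Pi.single k 1) m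
        - fderiv ℝ (H k) (ξ (φ t)) (Pi.single n 1))
    (hEL : ∀ k n t, Υ k n t = 0) :
    (∀ (k ℓ : Fin K) (t : Fin K → ℝ),
      fderiv ℝ (Lag k) t (Pi.single ℓ 1) - fderiv ℝ (Lag ℓ) t (Pi.single k 1)
        = ∑ m, ∑ n, P (ξ (φ t)) m n * fderiv ℝ (H k) (ξ (φ t)) (Pi.single m 1)
            * fderiv ℝ (H ℓ) (ξ (φ t)) (Pi.single n 1)) ∧
    ((∀ (k ℓ : Fin K) (t : Fin K → ℝ),
        fderiv ℝ (Lag k) t (Pi.single ℓ 1) = fderiv ℝ (Lag ℓ) t (Pi.single k 1)) ↔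
      (∀ (k ℓ : Fin K) (t : Fin K → ℝ),
        ∑ m, ∑ n, P (ξ (φ t)) m n * fderiv ℝ (H k) (ξ (φ t)) (Pi.single m 1)
            * fderiv ℝ (H ℓ) (ξ (φ t)) (Pi.single n 1) = 0)) :=
  statement8_general K M p φ hφ π hπ ξ hξ H hH ω P hPω hpull Lag hLag Υ hΥ hEL
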